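/- arXiv:1210.7078 — 2 statements merged into one kernel-verified Lean document; each statement's English description precedes it below -/
import Mathlib

section
/- For fixed positive reals β_i (i in a finite index set) and p_i ∈ [1,∞], define for each finite set J containing a fixed index i: b_i(J) = β_i τ(J) / ( τ(J) + p_i^{-1} Σ_{l∈J} β_l^{-1} ), where τ(J) = 1 − Σ_{l∈J} (β_l p_l)^{-1}. If τ(I) > 0 for a finite index set I, then for every i ∈ I, b_i(I) = inf over all subsets J ⊆ I with i ∈ J of b_i(J); i.e., the infimum is attained at J = I. -/
/-! Writing `τ(J) = 1 - ∑_{l ∈ J} q_l / β_l` and `S(J) = ∑_{l ∈ J} β_l⁻¹`, the quantity is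
`β_i τ / (τ + q_i S)`, which increases with `τ` and decreases with `S`. Shrinking `J` can only
increase `τ` and decrease `S`, so the value at `J = I` is the smallest. -/

lemma div_add_le_div_add_of_le {a t t' : ℝ} (ha : 0 ≤ a) (ht : 0 < t) (htt : t ≤ t') :
    t / (t + a) ≤ t' / (t' + a) := by
  rw [div_le_div_iff₀ (by positivity) (by linarith)]
  nlinarith

lemma mul_div_add_mul_le {b c s s' t t' : ℝ} (hb : 0 ≤ b) (hc : 0 ≤ c) (hs' : 0 ≤ s')
    (hss : s' ≤ s) (ht : 0 < t) (htt : t ≤ t') :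
    b * t / (t + c * s) ≤ b * t' / (t' + c * s') :=
  calc b * t / (t + c * s) ≤ b * t / (t + c * s') := by gcongr
    _ = b * (t / (t + c * s')) := mul_div_assoc ..
    _ ≤ b * (t' / (t' + c * s')) :=
      mul_le_mul_of_nonneg_left (div_add_le_div_add_of_le (by positivity) ht htt) hb
    _ = b * t' / (t' + c * s') := (mul_div_assoc ..).symm

theorem stmt_4 (I : Finset ℕ) (β q : ℕ → ℝ)
    (hβ : ∀ l ∈ I, 0 < β l) (hq : ∀ l ∈ I, q l ∈ Set.Icc (0:ℝ) 1)
    (hτ : 0 < 1 - ∑ l ∈ I, q l / β l)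
    (i : ℕ) (hi : i ∈ I) :
    β i * (1 - ∑ l ∈ I, q l / β l) /
        ((1 - ∑ l ∈ I, q l / β l) + q i * ∑ l ∈ I, (β l)⁻¹) =
      (I.powerset.filter fun J => i ∈ J).inf'
        ⟨I, by simp [hi]⟩
        (fun J => β i * (1 - ∑ l ∈ J, q l / β l) /
          ((1 - ∑ l ∈ J, q l / β l) + q i * ∑ l ∈ J, (β l)⁻¹)) := by
  refine le_antisymm (Finset.le_inf' _ _ fun J hJ => ?_) (Finset.inf'_le _ (by simp [hi]))
  have hJI : J ⊆ I := Finset.mem_powerset.1 (Finset.mem_filter.1 hJ).1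
  have hqβJ : ∑ l ∈ J, q l / β l ≤ ∑ l ∈ I, q l / β l :=
    Finset.sum_le_sum_of_subset_of_nonneg hJI fun l hl _ => div_nonneg (hq l hl).1 (hβ l hl).le
  have hSJ : ∑ l ∈ J, (β l)⁻¹ ≤ ∑ l ∈ I, (β l)⁻¹ :=
    Finset.sum_le_sum_of_subset_of_nonneg hJI fun l hl _ => (inv_pos.2 (hβ l hl)).le
  exact mul_div_add_mul_le (hβ i hi).le (hq i hi).1
    (Finset.sum_nonneg fun l hl => (inv_pos.2 (hβ l (hJI hl))).le) hSJ hτ (by linarith)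
end

section
/- Let f₀ be a probability density and f_j = f₀ (1 + G_j/f₀) = f₀ + G_j be probability densities for j in a finite set J, where G_j are as in the disjoint-support construction (pairwise disjoint supports, zero integrals). For i.i.d. observations X_1,…,X_n ~ f₀, the expected squared deviation of the averaged likelihood ratio satisfies E_{f₀} [ (1/|J|) Σ_{j∈J} ∏_{k=1}^n f_j(X_k)/f₀(X_k) − 1 ]² = (1/|J|²) Σ_{j∈J} ( 1 + ∫ G_j²/f₀ )^n − 1/|J|. -/
/-!
Write `L_j = f_j / f₀` for the likelihood ratios and `μ = f₀ · dx`. Then `∫ L_j dμ = ∫ f_j = 1`,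
and, since `(f₀ + G_j)(f₀ + G_{j'}) / f₀ = f₀ + G_j + G_{j'} + G_j G_{j'} / f₀`, also
`∫ L_j L_{j'} dμ = 1 + ∫ G_j G_{j'} / f₀`, which is `1` off the diagonal by disjointness of the
supports. Under the product measure `μ^{⊗n}` the products `Z_j = ∏_k L_j(X_k)` therefore have mean
`1` and second moments `E[Z_j Z_{j'}] = (∫ L_j L_{j'} dμ)^n`, and expanding the square of
`(1/|J|) ∑_j Z_j - 1` gives the formula.
-/

open MeasureTheory Finset

theorem integral_sq_average_sub_one {Ω ι : Type*} [MeasurableSpace Ω] {ν : Measure Ω}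
    [IsProbabilityMeasure ν] [Fintype ι] [Nonempty ι] (Z : ι → Ω → ℝ) (b : ι → ℝ)
    (hZ : ∀ i, Integrable (Z i) ν) (hZZ : ∀ i j, Integrable (fun ω => Z i ω * Z j ω) ν)
    (hmean : ∀ i, ∫ ω, Z i ω ∂ν = 1)
    (hcross : ∀ i j, i ≠ j → ∫ ω, Z i ω * Z j ω ∂ν = 1)
    (hdiag : ∀ i, ∫ ω, Z i ω * Z i ω ∂ν = b i) :
    ∫ ω, ((1 / (Fintype.card ι : ℝ)) * ∑ i, Z i ω - 1) ^ 2 ∂ν =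
      (1 / (Fintype.card ι : ℝ) ^ 2) * ∑ i, b i - 1 / (Fintype.card ι : ℝ) := by
  set c : ℝ := (Fintype.card ι : ℝ)
  have hc : c ≠ 0 := Nat.cast_ne_zero.mpr Fintype.card_ne_zero
  have hsquare : ∀ ω, ((1 / c) * ∑ i, Z i ω - 1) ^ 2 =
      (1 / c ^ 2) * ∑ i, ∑ j, Z i ω * Z j ω - (2 / c) * ∑ i, Z i ω + 1 := by
    intro ω
    rw [← sum_mul_sum]
    ring
  have hrow : ∀ i, ∑ j, ∫ ω, Z i ω * Z j ω ∂ν = b i + (c - 1) := by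
    intro i
    classical
    rw [← add_sum_erase _ _ (mem_univ i), hdiag,
      sum_congr rfl fun j hj => hcross i j (ne_of_mem_erase hj).symm, sum_const,
      card_erase_of_mem (mem_univ i), card_univ, nsmul_eq_mul, mul_one,
      Nat.cast_sub Fintype.card_pos, Nat.cast_one]
  have hintPairs : Integrable (fun ω => (1 / c ^ 2) * ∑ i, ∑ j, Z i ω * Z j ω) ν :=
    (integrable_finsetSum _ fun i _ => integrable_finsetSum _ fun j _ => hZZ i j).const_mul _
  have hintSum : Integrable (fun ω => (2 / c) * ∑ i, Z i ω) ν :=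
    (integrable_finsetSum _ fun i _ => hZ i).const_mul _
  have hint : Integrable (fun ω =>
      (1 / c ^ 2) * ∑ i, ∑ j, Z i ω * Z j ω - (2 / c) * ∑ i, Z i ω) ν := hintPairs.sub hintSum
  simp_rw [hsquare]
  rw [integral_add hint (integrable_const 1), integral_sub hintPairs hintSum,
    integral_const_mul, integral_const_mul, integral_finsetSum _ fun i _ => hZ i,
    integral_finsetSum _ fun i _ => integrable_finsetSum _ fun j _ => hZZ i j,
    sum_congr rfl fun i _ => integral_finsetSum _ fun j _ => hZZ i j]
  simp only [hrow, hmean, sum_add_distrib, sum_const, card_univ, nsmul_eq_mul, mul_one,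
    integral_const, probReal_univ, smul_eq_mul]
  field_simp
  ring

section Density

variable {α : Type*} [MeasurableSpace α] {μ : Measure α} {f : α → ℝ}

theorem integral_withDensity_ofReal (hfm : Measurable f) (hf : ∀ x, 0 ≤ f x) (g : α → ℝ) :
    ∫ x, g x ∂μ.withDensity (fun x => ENNReal.ofReal (f x)) = ∫ x, g x * f x ∂μ := by
  rw [integral_withDensity_eq_integral_toReal_smul hfm.ennreal_ofReal
    (ae_of_all _ fun _ => ENNReal.ofReal_lt_top)]
  simp_rw [ENNReal.toReal_ofReal (hf _), smul_eq_mul, mul_comm]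

theorem integrable_withDensity_ofReal_iff (hfm : Measurable f) (hf : ∀ x, 0 ≤ f x)
    {g : α → ℝ} :
    Integrable g (μ.withDensity fun x => ENNReal.ofReal (f x)) ↔
      Integrable (fun x => g x * f x) μ := by
  rw [integrable_withDensity_iff_integrable_smul' hfm.ennreal_ofReal
    (ae_of_all _ fun _ => ENNReal.ofReal_lt_top)]
  simp_rw [ENNReal.toReal_ofReal (hf _), smul_eq_mul, mul_comm]

theorem isProbabilityMeasure_withDensity_ofReal (hf : ∀ x, 0 ≤ f x) (hfi : Integrable f μ)
    (hf1 : ∫ x, f x ∂μ = 1) :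
    IsProbabilityMeasure (μ.withDensity fun x => ENNReal.ofReal (f x)) := by
  constructor
  rw [withDensity_apply _ MeasurableSet.univ, setLIntegral_univ,
    ← ofReal_integral_eq_lintegral_ofReal hfi (ae_of_all _ hf), hf1, ENNReal.ofReal_one]

end Density

theorem add_div_mul_self {a g : ℝ} (hg : a = 0 → g = 0) : (a + g) / a * a = a + g :=
  div_mul_cancel_of_imp fun h => by simp [h, hg h]

theorem add_div_mul_add_div_mul_self {a g g' : ℝ} (hg : a = 0 → g = 0) (hg' : a = 0 → g' = 0) :
    (a + g) / a * ((a + g') / a) * a = a + g + g' + g * g' / a := by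
  rcases eq_or_ne a 0 with rfl | ha
  · simp [hg rfl, hg' rfl]
  · field_simp
    ring

section LikelihoodRatio

variable {α ι : Type*} [MeasurableSpace α] [Fintype ι] {μ : Measure α} {f g g' : α → ℝ}

theorem integrable_likelihoodRatio (hfm : Measurable f) (hf : ∀ x, 0 ≤ f x)
    (hfi : Integrable f μ) (hgi : Integrable g μ) (hg : ∀ x, f x = 0 → g x = 0) :
    Integrable (fun x => (f x + g x) / f x) (μ.withDensity fun x => ENNReal.ofReal (f x)) := by
  rw [integrable_withDensity_ofReal_iff hfm hf]
  refine (hfi.add hgi).congr (ae_of_all _ fun x => ?_)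
  exact (add_div_mul_self (hg x)).symm

theorem integral_likelihoodRatio (hfm : Measurable f) (hf : ∀ x, 0 ≤ f x)
    (hfi : Integrable f μ) (hf1 : ∫ x, f x ∂μ = 1) (hgi : Integrable g μ) (hg0 : ∫ x, g x ∂μ = 0)
    (hg : ∀ x, f x = 0 → g x = 0) :
    ∫ x, (f x + g x) / f x ∂(μ.withDensity fun x => ENNReal.ofReal (f x)) = 1 := by
  rw [integral_withDensity_ofReal hfm hf]
  simp_rw [add_div_mul_self (hg _)]
  rw [integral_add hfi hgi, hf1, hg0, add_zero]

theorem integrable_likelihoodRatio_mul (hfm : Measurable f) (hf : ∀ x, 0 ≤ f x)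
    (hfi : Integrable f μ) (hgi : Integrable g μ) (hg'i : Integrable g' μ)
    (hgg' : Integrable (fun x => g x * g' x / f x) μ)
    (hg : ∀ x, f x = 0 → g x = 0) (hg' : ∀ x, f x = 0 → g' x = 0) :
    Integrable (fun x => (f x + g x) / f x * ((f x + g' x) / f x))
      (μ.withDensity fun x => ENNReal.ofReal (f x)) := by
  rw [integrable_withDensity_ofReal_iff hfm hf]
  refine (((hfi.add hgi).add hg'i).add hgg').congr (ae_of_all _ fun x => ?_)
  exact (add_div_mul_add_div_mul_self (hg x) (hg' x)).symm

theorem integral_likelihoodRatio_mul (hfm : Measurable f) (hf : ∀ x, 0 ≤ f x)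
    (hfi : Integrable f μ) (hf1 : ∫ x, f x ∂μ = 1) (hgi : Integrable g μ)
    (hg'i : Integrable g' μ) (hg0 : ∫ x, g x ∂μ = 0) (hg'0 : ∫ x, g' x ∂μ = 0)
    (hgg' : Integrable (fun x => g x * g' x / f x) μ)
    (hg : ∀ x, f x = 0 → g x = 0) (hg' : ∀ x, f x = 0 → g' x = 0) :
    ∫ x, (f x + g x) / f x * ((f x + g' x) / f x)
        ∂(μ.withDensity fun x => ENNReal.ofReal (f x)) = 1 + ∫ x, g x * g' x / f x ∂μ := by
  rw [integral_withDensity_ofReal hfm hf]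
  simp_rw [add_div_mul_add_div_mul_self (hg _) (hg' _)]
  rw [integral_add (f := fun x => f x + g x + g' x) ((hfi.add hgi).add hg'i) hgg',
    integral_add (f := fun x => f x + g x) (hfi.add hgi) hg'i,
    integral_add hfi hgi, hf1, hg0, hg'0, add_zero, add_zero]

theorem integrable_pi_prod_likelihoodRatio (hfm : Measurable f)
    (hf : ∀ x, 0 ≤ f x) (hfi : Integrable f μ) (hgi : Integrable g μ)
    (hg : ∀ x, f x = 0 → g x = 0) :
    Integrable (fun y : ι → α => ∏ k, (f (y k) + g (y k)) / f (y k))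
      (Measure.pi fun _ => μ.withDensity fun x => ENNReal.ofReal (f x)) :=
  have := isFiniteMeasure_withDensity_ofReal hfi.2
  Integrable.fintype_prod fun _ => integrable_likelihoodRatio hfm hf hfi hgi hg

theorem integral_pi_prod_likelihoodRatio (hfm : Measurable f)
    (hf : ∀ x, 0 ≤ f x) (hfi : Integrable f μ) (hf1 : ∫ x, f x ∂μ = 1) (hgi : Integrable g μ)
    (hg0 : ∫ x, g x ∂μ = 0) (hg : ∀ x, f x = 0 → g x = 0) :
    ∫ y : ι → α, ∏ k, (f (y k) + g (y k)) / f (y k)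
        ∂(Measure.pi fun _ => μ.withDensity fun x => ENNReal.ofReal (f x)) = 1 := by
  have := isFiniteMeasure_withDensity_ofReal hfi.2
  rw [integral_fintype_prod_eq_pow fun x => (f x + g x) / f x,
    integral_likelihoodRatio hfm hf hfi hf1 hgi hg0 hg, one_pow]

theorem integrable_pi_prod_likelihoodRatio_mul (hfm : Measurable f)
    (hf : ∀ x, 0 ≤ f x) (hfi : Integrable f μ) (hgi : Integrable g μ) (hg'i : Integrable g' μ)
    (hgg' : Integrable (fun x => g x * g' x / f x) μ)
    (hg : ∀ x, f x = 0 → g x = 0) (hg' : ∀ x, f x = 0 → g' x = 0) :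
    Integrable (fun y : ι → α =>
        (∏ k, (f (y k) + g (y k)) / f (y k)) * ∏ k, (f (y k) + g' (y k)) / f (y k))
      (Measure.pi fun _ => μ.withDensity fun x => ENNReal.ofReal (f x)) := by
  have := isFiniteMeasure_withDensity_ofReal hfi.2
  simp_rw [← prod_mul_distrib]
  exact Integrable.fintype_prod fun _ =>
    integrable_likelihoodRatio_mul hfm hf hfi hgi hg'i hgg' hg hg'

theorem integral_pi_prod_likelihoodRatio_mul (hfm : Measurable f)
    (hf : ∀ x, 0 ≤ f x) (hfi : Integrable f μ) (hf1 : ∫ x, f x ∂μ = 1) (hgi : Integrable g μ)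
    (hg'i : Integrable g' μ) (hg0 : ∫ x, g x ∂μ = 0) (hg'0 : ∫ x, g' x ∂μ = 0)
    (hgg' : Integrable (fun x => g x * g' x / f x) μ)
    (hg : ∀ x, f x = 0 → g x = 0) (hg' : ∀ x, f x = 0 → g' x = 0) :
    ∫ y : ι → α, (∏ k, (f (y k) + g (y k)) / f (y k)) * ∏ k, (f (y k) + g' (y k)) / f (y k)
        ∂(Measure.pi fun _ => μ.withDensity fun x => ENNReal.ofReal (f x)) =
      (1 + ∫ x, g x * g' x / f x ∂μ) ^ Fintype.card ι := by
  have := isFiniteMeasure_withDensity_ofReal hfi.2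
  simp_rw [← prod_mul_distrib]
  rw [integral_fintype_prod_eq_pow fun x => (f x + g x) / f x * ((f x + g' x) / f x),
    integral_likelihoodRatio_mul hfm hf hfi hf1 hgi hg'i hg0 hg'0 hgg' hg hg']

end LikelihoodRatio

theorem stmt_10_general (m n : ℕ) {J : Type*} [Fintype J] [Nonempty J]
    (f₀ : (Fin m → ℝ) → ℝ)
    (hf₀m : Measurable f₀) (hf₀0 : ∀ x, 0 ≤ f₀ x)
    (hf₀i : Integrable f₀) (hf₀1 : ∫ x, f₀ x = 1)
    (G : J → (Fin m → ℝ) → ℝ)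
    (hGi : ∀ j, Integrable (G j))
    (hsupp : ∀ j x, f₀ x = 0 → G j x = 0)
    (hzero : ∀ j, ∫ x, G j x = 0)
    (hdisj : ∀ j j', j ≠ j' → ∀ x, G j x * G j' x = 0)
    (hG2 : ∀ j, Integrable fun x => (G j x) ^ 2 / f₀ x) :
    ∫ y : Fin n → (Fin m → ℝ),
        ((1 / (Fintype.card J : ℝ)) *
            ∑ j, ∏ k, (f₀ (y k) + G j (y k)) / f₀ (y k) - 1) ^ 2
        ∂(Measure.pi fun _ => volume.withDensity fun x => ENNReal.ofReal (f₀ x)) =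
      (1 / (Fintype.card J : ℝ) ^ 2) *
          ∑ j, (1 + ∫ x, (G j x) ^ 2 / f₀ x) ^ n -
        1 / (Fintype.card J : ℝ) := by
  have := isProbabilityMeasure_withDensity_ofReal hf₀0 hf₀i hf₀1
  have hGG : ∀ i j, Integrable fun x => G i x * G j x / f₀ x := by
    intro i j
    rcases eq_or_ne i j with rfl | hij
    · simpa only [sq] using hG2 i
    · simp only [hdisj i j hij, zero_div]
      exact integrable_zero _ _ _
  apply integral_sq_average_sub_one
  · exact fun j => integrable_pi_prod_likelihoodRatio hf₀m hf₀0 hf₀i (hGi j) (hsupp j)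
  · exact fun i j => integrable_pi_prod_likelihoodRatio_mul hf₀m hf₀0 hf₀i (hGi i) (hGi j)
      (hGG i j) (hsupp i) (hsupp j)
  · exact fun j => integral_pi_prod_likelihoodRatio hf₀m hf₀0 hf₀i hf₀1 (hGi j) (hzero j)
      (hsupp j)
  · intro i j hij
    rw [integral_pi_prod_likelihoodRatio_mul hf₀m hf₀0 hf₀i hf₀1 (hGi i) (hGi j) (hzero i)
      (hzero j) (hGG i j) (hsupp i) (hsupp j)]
    simp [hdisj i j hij]
  · intro j
    rw [integral_pi_prod_likelihoodRatio_mul hf₀m hf₀0 hf₀i hf₀1 (hGi j) (hGi j) (hzero j)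
      (hzero j) (hGG j j) (hsupp j) (hsupp j), Fintype.card_fin]
    simp only [sq]

theorem stmt_10 (m n : ℕ) (hn : 0 < n) {J : Type*} [Fintype J] [Nonempty J]
    (f₀ : (Fin m → ℝ) → ℝ)
    (hf₀m : Measurable f₀) (hf₀0 : ∀ x, 0 ≤ f₀ x)
    (hf₀i : Integrable f₀) (hf₀1 : ∫ x, f₀ x = 1)
    (G : J → (Fin m → ℝ) → ℝ)
    (hGm : ∀ j, Measurable (G j)) (hGi : ∀ j, Integrable (G j))
    (hGpos : ∀ j x, 0 ≤ f₀ x + G j x)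
    (hsupp : ∀ j x, f₀ x = 0 → G j x = 0)
    (hzero : ∀ j, ∫ x, G j x = 0)
    (hdisj : ∀ j j', j ≠ j' → ∀ x, G j x * G j' x = 0)
    (hG2 : ∀ j, Integrable fun x => (G j x) ^ 2 / f₀ x) :
    ∫ y : Fin n → (Fin m → ℝ),
        ((1 / (Fintype.card J : ℝ)) *
            ∑ j, ∏ k, (f₀ (y k) + G j (y k)) / f₀ (y k) - 1) ^ 2
        ∂(Measure.pi fun _ => volume.withDensity fun x => ENNReal.ofReal (f₀ x)) =
      (1 / (Fintype.card J : ℝ) ^ 2) *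
          ∑ j, (1 + ∫ x, (G j x) ^ 2 / f₀ x) ^ n -
        1 / (Fintype.card J : ℝ) :=
  stmt_10_general m n f₀ hf₀m hf₀0 hf₀i hf₀1 G hGi hsupp hzero hdisj hG2
end
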